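/- Let S(F) denote the Schwartz space of a finitely generated free group F with word-length seminorms ‖f‖_k = sup_g (1+|g|)^k |f(g)|. Define θ_k(f) = g ↦ e^{−|g|/k} χ_{E_k}(g) f(g), where E_k = {g : |g| ≤ k}. Then each θ_k is a finite-rank linear map and for every f ∈ S(F) and l ≥ 0, ‖f − θ_k(f)‖_l → 0 as k → ∞. -/

import Mathlib

open Real

/-- Word length on the free group. -/
def wordLength {N : ℕ} (g : FreeGroup (Fin N)) : ℕ := (FreeGroup.toWord g).length

/-- The truncation maps `θ_k(f)(g) = e^{−|g|/k} χ_{E_k}(g) f(g)` on functions on the free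
group, where `E_k = {g : |g| ≤ k}`. -/
noncomputable def freeGroupTrunc (N k : ℕ) :
    (FreeGroup (Fin N) → ℂ) →ₗ[ℂ] (FreeGroup (Fin N) → ℂ) where
  toFun f := fun g =>
    (Real.exp (-(wordLength g : ℝ) / k) : ℂ) * (if wordLength g ≤ k then f g else 0)
  map_add' f h := by
    funext g
    by_cases hg : wordLength g ≤ k
    · simp only [Pi.add_apply, if_pos hg]; ring
    · simp only [Pi.add_apply, if_neg hg, mul_zero, add_zero]
  map_smul' c f := by
    funext g
    by_cases hg : wordLength g ≤ k
    · simp only [Pi.smul_apply, if_pos hg, RingHom.id_apply, smul_eq_mul]; ring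
    · simp only [Pi.smul_apply, if_neg hg, RingHom.id_apply, smul_eq_mul, mul_zero]

/-! Every element of the range of `θ_k` is supported in the finite ball `E_k`, so restriction
to `E_k` embeds the range into the finite-dimensional space `E_k → ℂ`. Pointwise,
`|f g - θ_k f g| ≤ (1 + |g|) / k * |f g|`: on `E_k` because `1 - e^{-x} ≤ x`, and off `E_k`
because there `1 < (1 + |g|) / k`. Hence `‖f - θ_k f‖_l ≤ ‖f‖_{l+1} / k`. -/

lemma finite_setOf_wordLength_le (N k : ℕ) :
    {g : FreeGroup (Fin N) | wordLength g ≤ k}.Finite :=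
  (List.finite_length_le _ k).preimage FreeGroup.toWord_injective.injOn

lemma freeGroupTrunc_apply (N k : ℕ) (f : FreeGroup (Fin N) → ℂ) (g : FreeGroup (Fin N)) :
    freeGroupTrunc N k f g =
      (Real.exp (-(wordLength g : ℝ) / k) : ℂ) * (if wordLength g ≤ k then f g else 0) :=
  rfl

lemma Submodule.finiteDimensional_of_forall_eq_zero_of_notMem {K α : Type*} [Field K]
    {p : Submodule K (α → K)} {s : Set α} (hs : s.Finite)
    (hp : ∀ f ∈ p, ∀ a ∉ s, f a = 0) : FiniteDimensional K p := by
  have : Finite s := hs.to_subtype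
  refine FiniteDimensional.of_injective
    ((LinearMap.funLeft K K ((↑) : s → α)).comp p.subtype) fun f f' hff' => ?_
  ext a
  by_cases ha : a ∈ s
  · exact congrFun hff' ⟨a, ha⟩
  · rw [hp f f.2 a ha, hp f' f'.2 a ha]

lemma finiteDimensional_range_freeGroupTrunc (N k : ℕ) :
    FiniteDimensional ℂ (LinearMap.range (freeGroupTrunc N k)) := by
  refine Submodule.finiteDimensional_of_forall_eq_zero_of_notMem
    (finite_setOf_wordLength_le N k) ?_
  rintro _ ⟨f, rfl⟩ g (hg : ¬wordLength g ≤ k)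
  rw [freeGroupTrunc_apply, if_neg hg, mul_zero]

lemma norm_sub_freeGroupTrunc_le {N k : ℕ} (hk : 0 < k) (f : FreeGroup (Fin N) → ℂ)
    (g : FreeGroup (Fin N)) :
    ‖f g - freeGroupTrunc N k f g‖ ≤ (1 + wordLength g) / k * ‖f g‖ := by
  have hk' : (0 : ℝ) < k := Nat.cast_pos.mpr hk
  rw [freeGroupTrunc_apply]
  split_ifs with hg
  · have hexp_le : Real.exp (-(wordLength g : ℝ) / k) ≤ 1 :=
      Real.exp_le_one_iff.mpr (div_nonpos_of_nonpos_of_nonneg (by simp) hk'.le)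
    have hfactor : f g - (Real.exp (-(wordLength g : ℝ) / k) : ℂ) * f g
        = ((1 - Real.exp (-(wordLength g : ℝ) / k) : ℝ) : ℂ) * f g := by
      push_cast; ring
    rw [hfactor, norm_mul, Complex.norm_real, Real.norm_of_nonneg (by linarith)]
    gcongr
    have hexp_ge : 1 - (wordLength g : ℝ) / k ≤ Real.exp (-(wordLength g : ℝ) / k) := by
      rw [neg_div]; exact Real.one_sub_le_exp_neg _
    have hdiv : (wordLength g : ℝ) / k ≤ (1 + wordLength g) / k := by gcongr; linarith
    linarith
  · have hlt : (k : ℝ) < wordLength g := by exact_mod_cast not_le.mp hg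
    rw [mul_zero, sub_zero]
    refine le_mul_of_one_le_left (norm_nonneg _) ?_
    rw [one_le_div hk']
    linarith

lemma pow_mul_norm_sub_freeGroupTrunc_le {N k l : ℕ} (hk : 0 < k)
    {f : FreeGroup (Fin N) → ℂ} {C : ℝ}
    (hC : ∀ g, (1 + (wordLength g : ℝ)) ^ (l + 1) * ‖f g‖ ≤ C) (g : FreeGroup (Fin N)) :
    (1 + (wordLength g : ℝ)) ^ l * ‖f g - freeGroupTrunc N k f g‖ ≤ C / k := by
  calc (1 + (wordLength g : ℝ)) ^ l * ‖f g - freeGroupTrunc N k f g‖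
      ≤ (1 + (wordLength g : ℝ)) ^ l * ((1 + wordLength g) / k * ‖f g‖) := by
        gcongr
        exact norm_sub_freeGroupTrunc_le hk f g
    _ = (1 + (wordLength g : ℝ)) ^ (l + 1) * ‖f g‖ / k := by ring
    _ ≤ C / k := by gcongr; exact hC g

theorem stmt_14_general (N : ℕ) :
    (∀ k : ℕ, 1 ≤ k → FiniteDimensional ℂ ↥(LinearMap.range (freeGroupTrunc N k))) ∧
    (∀ f : FreeGroup (Fin N) → ℂ,
      (∀ m : ℕ, ∃ C : ℝ, ∀ g, (1 + (wordLength g : ℝ)) ^ m * ‖f g‖ ≤ C) →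
      ∀ l : ℕ, ∀ ε > (0 : ℝ), ∃ K : ℕ, ∀ k ≥ K, 1 ≤ k →
        ∀ g : FreeGroup (Fin N),
          (1 + (wordLength g : ℝ)) ^ l * ‖f g - freeGroupTrunc N k f g‖ ≤ ε) := by
  refine ⟨fun k _ => finiteDimensional_range_freeGroupTrunc N k, ?_⟩
  intro f hf l ε hε
  obtain ⟨C, hC⟩ := hf (l + 1)
  refine ⟨⌈C / ε⌉₊, fun k hK hk g => ?_⟩
  have hk' : (0 : ℝ) < k := by exact_mod_cast hk
  have hCk : C ≤ k * ε := (div_le_iff₀ hε).mp ((Nat.le_ceil _).trans (by exact_mod_cast hK))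
  calc _ ≤ C / k := pow_mul_norm_sub_freeGroupTrunc_le hk hC g
    _ ≤ ε := by rw [div_le_iff₀ hk']; linarith

/-- On the Schwartz space of a free group `F` on `N ≥ 2` generators (functions
`f` with `‖f‖_l = sup_g (1+|g|)^l |f(g)| < ∞` for all `l`), each `θ_k` (for `k ≥ 1`) is a
finite-rank linear map, and for every Schwartz `f` and every `l ≥ 0`,
`‖f − θ_k f‖_l → 0` as `k → ∞`. -/
theorem stmt_14 (N : ℕ) (hN : 2 ≤ N) :
    (∀ k : ℕ, 1 ≤ k → FiniteDimensional ℂ ↥(LinearMap.range (freeGroupTrunc N k))) ∧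
    (∀ f : FreeGroup (Fin N) → ℂ,
      (∀ m : ℕ, ∃ C : ℝ, ∀ g, (1 + (wordLength g : ℝ)) ^ m * ‖f g‖ ≤ C) →
      ∀ l : ℕ, ∀ ε > (0 : ℝ), ∃ K : ℕ, ∀ k ≥ K, 1 ≤ k →
        ∀ g : FreeGroup (Fin N),
          (1 + (wordLength g : ℝ)) ^ l * ‖f g - freeGroupTrunc N k f g‖ ≤ ε) :=
  stmt_14_general N
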